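/- Let |ψ₅⟩ be a 5-qubit AME stabilizer state. For every choice of three qubits {i,j,k} ⊆ {1,...,5}, there is exactly one non-identity stabilizer element supported exactly on {i,j,k}, and these (together with the identity and the weight-4 and weight-5 elements) account for all 2^5 = 32 stabilizer elements: 1 of weight 0, 10 of weight 3, 15 of weight 4, and 6 of weight 5. -/

import Mathlib

open Matrix

/-- The four single-qubit Pauli matrices `I, X, Y, Z` indexed by `Fin 4`. -/
def pauliMat : Fin 4 → Matrix (Fin 2) (Fin 2) ℂ :=
  ![1, !![0, 1; 1, 0], !![0, -Complex.I; Complex.I, 0], !![1, 0; 0, -1]]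

/-- The `n`-qubit Pauli string (tensor product of single-qubit Paulis) described by
`p : Fin n → Fin 4`, realized as a matrix on `(Fin n → Fin 2)`. -/
def pauliOp {n : ℕ} (p : Fin n → Fin 4) :
    Matrix (Fin n → Fin 2) (Fin n → Fin 2) ℂ :=
  Matrix.of fun i j => ∏ k, pauliMat (p k) (i k) (j k)

/-- `σ` is a signed Pauli string of weight `w` (support of size `w`). -/
def hasWeight {n : ℕ} (σ : Matrix (Fin n → Fin 2) (Fin n → Fin 2) ℂ) (w : ℕ) : Prop :=
  ∃ (ε : ℂ) (p : Fin n → Fin 4), (ε = 1 ∨ ε = -1) ∧ σ = ε • pauliOp p ∧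
    {i | p i ≠ 0}.ncard = w

/-!
Writing every stabilizer as `±` a Pauli string turns `S` into a set `P` of `32` Pauli labels that is
closed under multiplication and pairwise commuting, and the AME condition says that the
non-identity labels in `P` have weight at least `3`. A character sum shows that `P` is its own
commutant, since `|P| = 2⁵`; this gives the MacWilliams identity
`2⁵ ∑_{p ∈ P} x ^ wt p = ∑_{q ∈ P} (1 + 3x) ^ (5 - wt q) (1 - x) ^ wt q`, and evaluating it at
`x = -1` and `x = 3` gives `10`, `15`, `6` elements of weight `3`, `4`, `5`. If no element of `P`
were supported on a triple `T`, restriction to the two qubits outside `T` would embed `P` into a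
set of `4² = 16` labels; so each of the `10` triples supports one of the `10` weight-`3` elements.
-/

open Finset

section KroneckerPi

variable {ι α β γ R : Type*} [Fintype ι] [CommSemiring R]

def kroneckerPi (M : ι → Matrix α β R) : Matrix (ι → α) (ι → β) R :=
  Matrix.of fun i j => ∏ k, M k (i k) (j k)

theorem kroneckerPi_mul [DecidableEq ι] [Fintype β] (M : ι → Matrix α β R)
    (N : ι → Matrix β γ R) : kroneckerPi M * kroneckerPi N = kroneckerPi fun k => M k * N k := by
  ext i j
  simp only [kroneckerPi, Matrix.mul_apply, Matrix.of_apply, Fintype.prod_sum,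
    ← prod_mul_distrib]

theorem kroneckerPi_smul (c : ι → R) (M : ι → Matrix α β R) :
    (kroneckerPi fun k => c k • M k) = (∏ k, c k) • kroneckerPi M := by
  ext i j
  simp only [kroneckerPi, Matrix.smul_apply, Matrix.of_apply, smul_eq_mul, prod_mul_distrib]

theorem trace_kroneckerPi [DecidableEq ι] [Fintype α] (M : ι → Matrix α α R) :
    (kroneckerPi M).trace = ∏ k, (M k).trace := by
  simp only [kroneckerPi, Matrix.trace, Matrix.diag, Matrix.of_apply, Fintype.prod_sum]

theorem kroneckerPi_one [DecidableEq α] : kroneckerPi (fun _ : ι => (1 : Matrix α α R)) = 1 := by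
  ext i j
  simp only [kroneckerPi, Matrix.of_apply, Matrix.one_apply, Fintype.prod_boole, funext_iff]

end KroneckerPi

/-- Up to phase, the labels `0, 1, 2, 3` of `I, X, Y, Z` multiply as the Klein four-group. -/
def pauliLabelMul : Fin 4 → Fin 4 → Fin 4 :=
  ![![0, 1, 2, 3], ![1, 0, 3, 2], ![2, 3, 0, 1], ![3, 2, 1, 0]]

def pauliPhase : Fin 4 → Fin 4 → ℂ :=
  ![![1, 1, 1, 1], ![1, 1, Complex.I, -Complex.I], ![1, -Complex.I, 1, Complex.I],
    ![1, Complex.I, -Complex.I, 1]]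

def pauliCommSign : Fin 4 → Fin 4 → ℤ :=
  ![![1, 1, 1, 1], ![1, 1, -1, -1], ![1, -1, 1, -1], ![1, -1, -1, 1]]

theorem pauliMat_mul (a b : Fin 4) :
    pauliMat a * pauliMat b = pauliPhase a b • pauliMat (pauliLabelMul a b) := by
  fin_cases a <;> fin_cases b <;> ext i j <;> fin_cases i <;> fin_cases j <;>
    simp [pauliMat, pauliPhase, pauliLabelMul, Matrix.mul_apply]

theorem trace_pauliMat (a : Fin 4) : (pauliMat a).trace = if a = 0 then 2 else 0 := by
  fin_cases a <;> simp [pauliMat, Matrix.trace_fin_two]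

theorem pauliPhase_self (a : Fin 4) : pauliPhase a a = 1 := by
  fin_cases a <;> rfl

theorem pauliPhase_comm (a b : Fin 4) :
    pauliPhase a b = pauliCommSign a b * pauliPhase b a := by
  fin_cases a <;> fin_cases b <;> simp [pauliPhase, pauliCommSign]

theorem pauliLabelMul_comm (a b : Fin 4) : pauliLabelMul a b = pauliLabelMul b a := by
  revert a b; decide

theorem pauliLabelMul_eq_zero_iff {a b : Fin 4} : pauliLabelMul a b = 0 ↔ a = b := by
  revert a b; decide

theorem pauliLabelMul_cancel_left (a b : Fin 4) : pauliLabelMul a (pauliLabelMul a b) = b := by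
  revert a b; decide

theorem pauliCommSign_mul_self (a b : Fin 4) : pauliCommSign a b * pauliCommSign a b = 1 := by
  revert a b; decide

theorem pauliCommSign_labelMul_right (a b c : Fin 4) :
    pauliCommSign a (pauliLabelMul b c) = pauliCommSign a b * pauliCommSign a c := by
  revert a b c; decide

theorem sum_ite_mul_pauliCommSign {R : Type*} [CommRing R] (x : R) (b : Fin 4) :
    ∑ a, (if a = 0 then 1 else x) * pauliCommSign a b = if b = 0 then 1 + 3 * x else 1 - x := by
  fin_cases b <;> simp [Fin.sum_univ_four, pauliCommSign] <;> ring

section PauliString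

variable {n : ℕ}

def pauliProd (p q : Fin n → Fin 4) : Fin n → Fin 4 := fun k => pauliLabelMul (p k) (q k)

def commSign (p q : Fin n → Fin 4) : ℤ := ∏ k, pauliCommSign (p k) (q k)

def pauliSupport (p : Fin n → Fin 4) : Finset (Fin n) := {k | p k ≠ 0}

def pauliWeight (p : Fin n → Fin 4) : ℕ := #(pauliSupport p)

theorem pauliOp_eq_kroneckerPi (p : Fin n → Fin 4) :
    pauliOp p = kroneckerPi fun k => pauliMat (p k) := rfl

theorem pauliOp_zero : pauliOp (0 : Fin n → Fin 4) = 1 := by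
  rw [pauliOp_eq_kroneckerPi, ← kroneckerPi_one]
  rfl

theorem pauliOp_mul (p q : Fin n → Fin 4) :
    pauliOp p * pauliOp q = (∏ k, pauliPhase (p k) (q k)) • pauliOp (pauliProd p q) := by
  simp only [pauliOp_eq_kroneckerPi, kroneckerPi_mul, pauliMat_mul, kroneckerPi_smul, pauliProd]

theorem pauliProd_eq_zero_iff {p q : Fin n → Fin 4} : pauliProd p q = 0 ↔ p = q := by
  simp only [funext_iff, pauliProd, Pi.zero_apply, pauliLabelMul_eq_zero_iff]

theorem trace_pauliOp (p : Fin n → Fin 4) :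
    (pauliOp p).trace = if p = 0 then 2 ^ n else 0 := by
  simp only [pauliOp_eq_kroneckerPi, trace_kroneckerPi, trace_pauliMat, Fintype.prod_ite_zero,
    funext_iff, Pi.zero_apply, prod_const, card_univ, Fintype.card_fin]

theorem trace_pauliOp_mul (p q : Fin n → Fin 4) :
    (pauliOp p * pauliOp q).trace = if p = q then 2 ^ n else 0 := by
  rw [pauliOp_mul, Matrix.trace_smul, trace_pauliOp]
  split_ifs with h h' h'
  · subst h'; simp [pauliPhase_self]
  · exact absurd (pauliProd_eq_zero_iff.mp h) h'
  · exact absurd (pauliProd_eq_zero_iff.mpr h') h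
  · simp

theorem smul_pauliOp_inj {c d : ℂ} {p q : Fin n → Fin 4} (hd : d ≠ 0)
    (h : c • pauliOp p = d • pauliOp q) : p = q ∧ c = d := by
  have htrace := congrArg (fun M => (M * pauliOp q).trace) h
  simp only [Matrix.smul_mul, Matrix.trace_smul, trace_pauliOp_mul, smul_eq_mul] at htrace
  have hpq : p = q := by
    by_contra hpq
    simp [hpq, hd] at htrace
  subst hpq
  simpa using htrace

theorem pauliOp_mul_comm (p q : Fin n → Fin 4) :
    pauliOp p * pauliOp q = (commSign p q : ℂ) • (pauliOp q * pauliOp p) := by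
  have hprod : pauliProd p q = pauliProd q p := funext fun k => pauliLabelMul_comm _ _
  rw [pauliOp_mul, pauliOp_mul, hprod, smul_smul, commSign, Int.cast_prod,
    ← prod_mul_distrib]
  exact congrArg (· • _) (prod_congr rfl fun k _ => pauliPhase_comm _ _)

theorem commSign_mul_self (p q : Fin n → Fin 4) : commSign p q * commSign p q = 1 := by
  simp only [commSign, ← prod_mul_distrib, pauliCommSign_mul_self, prod_const_one]

theorem commSign_pauliProd_right (p q r : Fin n → Fin 4) :
    commSign p (pauliProd q r) = commSign p q * commSign p r := by
  simp only [commSign, pauliProd, pauliCommSign_labelMul_right, prod_mul_distrib]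

theorem coe_pauliSupport (p : Fin n → Fin 4) :
    (pauliSupport p : Set (Fin n)) = {k | p k ≠ 0} := by
  simp [pauliSupport]

theorem ncard_setOf_ne_zero (p : Fin n → Fin 4) : {k | p k ≠ 0}.ncard = pauliWeight p := by
  rw [← coe_pauliSupport, Set.ncard_coe_finset, pauliWeight]

theorem pauliWeight_eq_zero_iff {p : Fin n → Fin 4} : pauliWeight p = 0 ↔ p = 0 := by
  simp [pauliWeight, pauliSupport, filter_eq_empty_iff, funext_iff]

theorem pauliWeight_le (p : Fin n → Fin 4) : pauliWeight p ≤ n :=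
  (card_filter_le _ _).trans_eq (by simp)

theorem prod_ite_eq_pow_pauliWeight {M : Type*} [CommMonoid M] (a b : M) (p : Fin n → Fin 4) :
    ∏ k, (if p k = 0 then a else b) = a ^ (n - pauliWeight p) * b ^ pauliWeight p := by
  rw [prod_ite, prod_const, prod_const, pauliWeight, pauliSupport]
  congr 2
  have := card_filter_add_card_filter_not (s := univ) (fun k => p k = 0)
  simp only [card_univ, Fintype.card_fin, ← ne_eq] at this
  omega

theorem sum_pow_pauliWeight_mul_commSign {R : Type*} [CommRing R] (x : R) (q : Fin n → Fin 4) :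
    ∑ p, x ^ pauliWeight p * commSign p q =
      (1 + 3 * x) ^ (n - pauliWeight q) * (1 - x) ^ pauliWeight q := by
  have hpow (p : Fin n → Fin 4) : x ^ pauliWeight p = ∏ k, if p k = 0 then 1 else x := by
    rw [prod_ite_eq_pow_pauliWeight, one_pow, one_mul]
  simp only [hpow, commSign, Int.cast_prod, ← prod_mul_distrib]
  rw [← Fintype.prod_sum fun k a => (if a = 0 then 1 else x) * (pauliCommSign a (q k) : R)]
  simp only [sum_ite_mul_pauliCommSign]
  exact prod_ite_eq_pow_pauliWeight _ _ q

theorem sum_commSign (q : Fin n → Fin 4) :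
    ∑ p, (commSign p q : ℤ) = if q = 0 then 4 ^ n else 0 := by
  have := sum_pow_pauliWeight_mul_commSign (1 : ℤ) q
  simp only [Int.cast_id, one_pow, one_mul, sub_self, zero_pow_eq, pauliWeight_eq_zero_iff]
    at this
  rw [this]
  split_ifs with h
  · simp [h, pauliWeight_eq_zero_iff.mpr rfl]
  · simp

end PauliString

section Isotropic

variable {n : ℕ}

theorem pauliProd_cancel_left (p q : Fin n → Fin 4) : pauliProd p (pauliProd p q) = q :=
  funext fun _ => pauliLabelMul_cancel_left _ _

theorem commSign_eq_one_or_eq_neg_one (p q : Fin n → Fin 4) :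
    commSign p q = 1 ∨ commSign p q = -1 :=
  mul_self_eq_one_iff.mp (commSign_mul_self p q)

structure IsIsotropicSubgroup (P : Finset (Fin n → Fin 4)) : Prop where
  zero_mem : 0 ∈ P
  pauliProd_mem : ∀ p ∈ P, ∀ q ∈ P, pauliProd p q ∈ P
  commSign_eq_one : ∀ p ∈ P, ∀ q ∈ P, commSign p q = 1

def commutant (P : Finset (Fin n → Fin 4)) : Finset (Fin n → Fin 4) :=
  {p | ∀ q ∈ P, commSign p q = 1}

variable {P : Finset (Fin n → Fin 4)}

/-- Translation by `q₀` permutes `P` and multiplies every term by `commSign p q₀ = -1`. -/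
theorem sum_commSign_eq_zero (hmul : ∀ p ∈ P, ∀ q ∈ P, pauliProd p q ∈ P)
    {p q₀ : Fin n → Fin 4} (hq₀ : q₀ ∈ P) (hpq₀ : commSign p q₀ = -1) :
    ∑ q ∈ P, commSign p q = 0 := by
  have htranslate : ∑ q ∈ P, commSign p q = ∑ q ∈ P, commSign p (pauliProd q₀ q) :=
    sum_nbij' (pauliProd q₀ ·) (pauliProd q₀ ·) (fun q hq => hmul _ hq₀ _ hq)
      (fun q hq => hmul _ hq₀ _ hq) (fun q _ => pauliProd_cancel_left _ _)
      (fun q _ => pauliProd_cancel_left _ _)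
      (fun q _ => by rw [pauliProd_cancel_left])
  simp only [commSign_pauliProd_right, hpq₀, neg_one_mul, sum_neg_distrib] at htranslate
  omega

theorem sum_commSign_eq_ite_commutant (hmul : ∀ p ∈ P, ∀ q ∈ P, pauliProd p q ∈ P)
    (p : Fin n → Fin 4) :
    ∑ q ∈ P, commSign p q = if p ∈ commutant P then (#P : ℤ) else 0 := by
  split_ifs with hp
  · simp only [commutant, mem_filter, mem_univ, true_and] at hp
    simp [sum_congr rfl hp]
  · simp only [commutant, mem_filter, mem_univ, true_and, not_forall] at hp
    obtain ⟨q₀, hq₀, hpq₀⟩ := hp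
    exact sum_commSign_eq_zero hmul hq₀ ((commSign_eq_one_or_eq_neg_one p q₀).resolve_left hpq₀)

theorem card_mul_card_commutant (h0 : 0 ∈ P) (hmul : ∀ p ∈ P, ∀ q ∈ P, pauliProd p q ∈ P) :
    #P * #(commutant P) = 4 ^ n := by
  have hdouble := sum_comm (s := univ) (t := P) (f := fun p q => commSign p q)
  simp only [sum_commSign_eq_ite_commutant hmul, sum_commSign, sum_ite_mem, univ_inter, sum_const,
    sum_ite_eq', if_pos h0, nsmul_eq_mul, mul_comm] at hdouble
  exact_mod_cast hdouble

namespace IsIsotropicSubgroup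

theorem commutant_eq (hP : IsIsotropicSubgroup P) (hcard : #P = 2 ^ n) : commutant P = P := by
  symm
  refine eq_of_subset_of_card_le (fun p hp => ?_) ?_
  · simpa [commutant] using hP.commSign_eq_one p hp
  · have h := card_mul_card_commutant hP.zero_mem hP.pauliProd_mem
    rw [hcard, show (4 : ℕ) ^ n = 2 ^ n * 2 ^ n by rw [← mul_pow]; norm_num] at h
    rw [hcard, Nat.eq_of_mul_eq_mul_left (by positivity) h]

theorem sum_commSign_eq_ite (hP : IsIsotropicSubgroup P) (hcard : #P = 2 ^ n)
    (p : Fin n → Fin 4) : ∑ q ∈ P, commSign p q = if p ∈ P then (2 ^ n : ℤ) else 0 := by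
  rw [sum_commSign_eq_ite_commutant hP.pauliProd_mem, hP.commutant_eq hcard, hcard]
  push_cast
  rfl

/-- The MacWilliams identity for a self-dual stabilizer code. -/
theorem macWilliams (hP : IsIsotropicSubgroup P) (hcard : #P = 2 ^ n) {R : Type*} [CommRing R]
    (x : R) : 2 ^ n * ∑ p ∈ P, x ^ pauliWeight p =
      ∑ q ∈ P, (1 + 3 * x) ^ (n - pauliWeight q) * (1 - x) ^ pauliWeight q := by
  have hchar (p : Fin n → Fin 4) : ∑ q ∈ P, (commSign p q : R) = if p ∈ P then 2 ^ n else 0 := by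
    rw [← Int.cast_sum, hP.sum_commSign_eq_ite hcard]
    split_ifs <;> simp
  calc 2 ^ n * ∑ p ∈ P, x ^ pauliWeight p
      = ∑ p, x ^ pauliWeight p * ∑ q ∈ P, (commSign p q : R) := by
        simp only [hchar, mul_ite, mul_zero, sum_ite_mem, univ_inter, mul_sum, mul_comm]
    _ = ∑ q ∈ P, ∑ p, x ^ pauliWeight p * commSign p q := by
        simp only [mul_sum]
        exact sum_comm
    _ = _ := sum_congr rfl fun q _ => sum_pow_pauliWeight_mul_commSign x q

end IsIsotropicSubgroup

end Isotropic

section WeightDistribution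

variable {n : ℕ} {P : Finset (Fin n → Fin 4)}

def weightCount (P : Finset (Fin n → Fin 4)) (w : ℕ) : ℕ := #{p ∈ P | pauliWeight p = w}

theorem sum_eq_sum_weightCount {M : Type*} [AddCommMonoid M] (f : ℕ → M) :
    ∑ p ∈ P, f (pauliWeight p) = ∑ w ∈ range (n + 1), weightCount P w • f w := by
  rw [← sum_fiberwise_of_maps_to (g := pauliWeight) (t := range (n + 1))
    fun p _ => mem_range_succ_iff.mpr (pauliWeight_le p)]
  refine sum_congr rfl fun w _ => ?_
  rw [sum_congr rfl fun p hp => congrArg f (mem_filter.mp hp).2, sum_const, weightCount]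

theorem weightCount_zero (h0 : 0 ∈ P) : weightCount P 0 = 1 := by
  rw [weightCount, card_eq_one]
  refine ⟨0, ?_⟩
  ext p
  simp only [mem_filter, mem_singleton, pauliWeight_eq_zero_iff]
  exact ⟨fun h => h.2, fun h => ⟨h ▸ h0, h⟩⟩

theorem weightCount_eq_zero {d w : ℕ} (hdist : ∀ p ∈ P, p ≠ 0 → d ≤ pauliWeight p)
    (hw₀ : w ≠ 0) (hwd : w < d) : weightCount P w = 0 := by
  rw [weightCount, card_eq_zero, filter_eq_empty_iff]
  intro p hp hpw
  have := hdist p hp (fun h => hw₀ (hpw ▸ pauliWeight_eq_zero_iff.mpr h))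
  omega

theorem card_le_of_forall_support_subset (hmul : ∀ p ∈ P, ∀ q ∈ P, pauliProd p q ∈ P)
    {T : Finset (Fin n)} (hT : ∀ p ∈ P, pauliSupport p ⊆ T → p = 0) :
    #P ≤ 4 ^ (n - #T) := by
  have hinj : Set.InjOn (fun (p : Fin n → Fin 4) (k : ↥Tᶜ) => p k) P := by
    intro p hp q hq hpq
    have hsupp : pauliSupport (pauliProd p q) ⊆ T := by
      intro k hk
      by_contra hkT
      have hpqk : p k = q k := congrFun hpq ⟨k, mem_compl.mpr hkT⟩
      simp [pauliSupport, pauliProd, pauliLabelMul_eq_zero_iff, hpqk] at hk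
    exact pauliProd_eq_zero_iff.mp (hT _ (hmul p hp q hq) hsupp)
  calc #P ≤ #(univ : Finset (↥Tᶜ → Fin 4)) :=
        card_le_card_of_injOn _ (fun _ _ => mem_coe.mpr (mem_univ _)) hinj
    _ = 4 ^ (n - #T) := by simp

end WeightDistribution

section FiveQubits

variable {P : Finset (Fin 5 → Fin 4)}

theorem weightCount_of_five_qubits (hP : IsIsotropicSubgroup P) (hcard : #P = 32)
    (hdist : ∀ p ∈ P, p ≠ 0 → 3 ≤ pauliWeight p) :
    weightCount P 3 = 10 ∧ weightCount P 4 = 15 ∧ weightCount P 5 = 6 := by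
  have htotal := sum_eq_sum_weightCount (P := P) (fun _ => (1 : ℕ))
  have hminus := hP.macWilliams hcard (-1 : ℤ)
  have hthree := hP.macWilliams hcard (3 : ℤ)
  rw [sum_eq_sum_weightCount (fun w => (-1 : ℤ) ^ w),
    sum_eq_sum_weightCount (fun w => (1 + 3 * (-1) : ℤ) ^ (5 - w) * (1 - (-1)) ^ w)] at hminus
  rw [sum_eq_sum_weightCount (fun w => (3 : ℤ) ^ w),
    sum_eq_sum_weightCount (fun w => (1 + 3 * 3 : ℤ) ^ (5 - w) * (1 - 3) ^ w)] at hthree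
  simp only [sum_range_succ, range_zero, sum_empty, weightCount_zero hP.zero_mem,
    weightCount_eq_zero hdist one_ne_zero (by norm_num),
    weightCount_eq_zero hdist two_ne_zero (by norm_num)] at htotal hminus hthree
  norm_num at htotal hminus hthree
  omega

theorem exists_support_eq_of_five_qubits (hP : IsIsotropicSubgroup P) (hcard : #P = 32)
    (hdist : ∀ p ∈ P, p ≠ 0 → 3 ≤ pauliWeight p) {T : Finset (Fin 5)} (hT : #T = 3) :
    ∃ p ∈ P, pauliSupport p = T := by
  by_contra! h
  have hle := card_le_of_forall_support_subset hP.pauliProd_mem (T := T) fun p hp hpT => by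
    by_contra hp0
    exact h p hp (eq_of_subset_of_card_le hpT (hT ▸ hdist p hp hp0))
  rw [hcard, hT] at hle
  norm_num at hle

/-- Each of the `10` triples supports an element of weight `3`, and there are only `10` of those. -/
theorem card_filter_support_eq_of_five_qubits (hP : IsIsotropicSubgroup P) (hcard : #P = 32)
    (hdist : ∀ p ∈ P, p ≠ 0 → 3 ≤ pauliWeight p) {T : Finset (Fin 5)} (hT : #T = 3) :
    #{p ∈ P | pauliSupport p = T} = 1 := by
  have hfibers : weightCount P 3 = ∑ T ∈ powersetCard 3 univ, #{p ∈ P | pauliSupport p = T} := by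
    rw [weightCount, card_eq_sum_card_fiberwise (s := {p ∈ P | pauliWeight p = 3})
      (f := pauliSupport) (t := powersetCard 3 univ)
      fun p hp => mem_powersetCard_univ.mpr (mem_filter.mp hp).2]
    refine sum_congr rfl fun T hT => ?_
    rw [filter_filter]
    refine congrArg card (filter_congr fun p _ => ?_)
    rw [mem_powersetCard_univ] at hT
    exact ⟨fun h => h.2, fun h => ⟨by rw [pauliWeight, h, hT], h⟩⟩
  have hsum : ∑ T ∈ powersetCard 3 (univ : Finset (Fin 5)), 1 =
      ∑ T ∈ powersetCard 3 univ, #{p ∈ P | pauliSupport p = T} := by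
    rw [← hfibers, (weightCount_of_five_qubits hP hcard hdist).1]
    rfl
  refine ((sum_eq_sum_iff_of_le fun T' hT' => ?_).mp hsum T (mem_powersetCard_univ.mpr hT)).symm
  obtain ⟨p, hp, hpT'⟩ := exists_support_eq_of_five_qubits hP hcard hdist
    (mem_powersetCard_univ.mp hT')
  exact card_pos.mpr ⟨p, mem_filter.mpr ⟨hp, hpT'⟩⟩

end FiveQubits

theorem neg_notMem_of_forall_mulVec_eq {m : Type*} [Fintype m] {S : Finset (Matrix m m ℂ)}
    {v : m → ℂ} (hv : v ≠ 0) (hstab : ∀ σ ∈ S, σ *ᵥ v = v) {σ : Matrix m m ℂ} (hσ : σ ∈ S) :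
    -σ ∉ S := fun hσ' => by
  have h := hstab _ hσ'
  rw [Matrix.neg_mulVec, hstab σ hσ, neg_eq_iff_add_eq_zero, ← two_smul ℂ, smul_eq_zero] at h
  exact h.elim (by norm_num) hv

theorem eq_one_of_mul_eq_smul_mul {m : Type*} [Fintype m] {A B : Matrix m m ℂ} {c : ℂ}
    {v : m → ℂ} (hv : v ≠ 0) (hAB : (A * B) *ᵥ v = v) (hBA : (B * A) *ᵥ v = v)
    (h : A * B = c • (B * A)) : c = 1 := by
  rw [h, Matrix.smul_mulVec, hBA] at hAB
  have hc : (c - 1) • v = 0 := by rw [sub_smul, one_smul, hAB, sub_self]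
  exact sub_eq_zero.mp ((smul_eq_zero.mp hc).resolve_right hv)

section StabilizerLabels

variable {n : ℕ} {S : Finset (Matrix (Fin n → Fin 2) (Fin n → Fin 2) ℂ)}

open Classical in
noncomputable def labelSet (S : Finset (Matrix (Fin n → Fin 2) (Fin n → Fin 2) ℂ)) :
    Finset (Fin n → Fin 4) :=
  {p | pauliOp p ∈ S ∨ -pauliOp p ∈ S}

open Classical in
noncomputable def labelSign (S : Finset (Matrix (Fin n → Fin 2) (Fin n → Fin 2) ℂ))
    (p : Fin n → Fin 4) : ℂ :=
  if pauliOp p ∈ S then 1 else -1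

theorem labelSign_eq_one_or_eq_neg_one (p : Fin n → Fin 4) :
    labelSign S p = 1 ∨ labelSign S p = -1 := by
  unfold labelSign
  split_ifs <;> simp

theorem mem_labelSet_of_smul_mem {ε : ℂ} {p : Fin n → Fin 4} (hε : ε = 1 ∨ ε = -1)
    (h : ε • pauliOp p ∈ S) : p ∈ labelSet S := by
  rcases hε with rfl | rfl <;> simp_all [labelSet]

theorem labelSign_smul_mem {p : Fin n → Fin 4} (hp : p ∈ labelSet S) :
    labelSign S p • pauliOp p ∈ S := by
  unfold labelSign
  split_ifs with h
  · simpa using h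
  · simpa [labelSet, h] using hp

theorem labelSign_eq (hneg : ∀ σ ∈ S, -σ ∉ S) {ε : ℂ} {p : Fin n → Fin 4}
    (hε : ε = 1 ∨ ε = -1) (h : ε • pauliOp p ∈ S) : labelSign S p = ε := by
  unfold labelSign
  rcases hε with rfl | rfl
  · simp_all
  · simp only [neg_smul, one_smul] at h
    exact if_neg fun hp => hneg _ hp h

theorem ncard_setOf_smul_pauliOp (hneg : ∀ σ ∈ S, -σ ∉ S) (Q : (Fin n → Fin 4) → Prop)
    [DecidablePred Q] :
    {σ ∈ (S : Set _) | ∃ (ε : ℂ) (p : Fin n → Fin 4), (ε = 1 ∨ ε = -1) ∧ σ = ε • pauliOp p ∧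
      Q p}.ncard = #{p ∈ labelSet S | Q p} := by
  rw [← Set.ncard_coe_finset]
  symm
  refine Set.ncard_congr (fun p _ => labelSign S p • pauliOp p) ?_ ?_ ?_
  · intro p hp
    rw [mem_coe, mem_filter] at hp
    exact ⟨labelSign_smul_mem hp.1, _, p, labelSign_eq_one_or_eq_neg_one p, rfl, hp.2⟩
  · intro p q _ _ hpq
    have hq : labelSign S q ≠ 0 := by
      rcases labelSign_eq_one_or_eq_neg_one (S := S) q with h | h <;> simp [h]
    exact (smul_pauliOp_inj hq hpq).1
  · rintro σ ⟨hσ, ε, p, hε, rfl, hQ⟩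
    refine ⟨p, ?_, by rw [labelSign_eq hneg hε hσ]⟩
    simpa using ⟨mem_labelSet_of_smul_mem hε hσ, hQ⟩

theorem card_labelSet (hneg : ∀ σ ∈ S, -σ ∉ S)
    (hpauli : ∀ σ ∈ S, ∃ (ε : ℂ) (p : Fin n → Fin 4), (ε = 1 ∨ ε = -1) ∧ σ = ε • pauliOp p) :
    #(labelSet S) = #S := by
  have h := ncard_setOf_smul_pauliOp hneg fun _ => True
  simp only [and_true, filter_true] at h
  rw [← h, Set.sep_eq_self_iff_mem_true.mpr hpauli, Set.ncard_coe_finset]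

theorem isIsotropicSubgroup_labelSet {v : (Fin n → Fin 2) → ℂ} (hv : v ≠ 0) (hone : 1 ∈ S)
    (hmul : ∀ σ ∈ S, ∀ τ ∈ S, σ * τ ∈ S)
    (hpauli : ∀ σ ∈ S, ∃ (ε : ℂ) (p : Fin n → Fin 4), (ε = 1 ∨ ε = -1) ∧ σ = ε • pauliOp p)
    (hstab : ∀ σ ∈ S, σ *ᵥ v = v) : IsIsotropicSubgroup (labelSet S) where
  zero_mem := mem_labelSet_of_smul_mem (Or.inl rfl) (by rwa [one_smul, pauliOp_zero])
  pauliProd_mem p hp q hq := by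
    have hmem := hmul _ (labelSign_smul_mem hp) _ (labelSign_smul_mem hq)
    obtain ⟨ε, r, hε, hr⟩ := hpauli _ hmem
    rw [hr] at hmem
    rw [smul_mul_smul_comm, pauliOp_mul, smul_smul] at hr
    have hε0 : ε ≠ 0 := by rcases hε with rfl | rfl <;> norm_num
    rw [(smul_pauliOp_inj hε0 hr).1]
    exact mem_labelSet_of_smul_mem hε hmem
  commSign_eq_one p hp q hq := by
    have hp' := labelSign_smul_mem hp
    have hq' := labelSign_smul_mem hq
    have hcomm : (labelSign S p • pauliOp p) * (labelSign S q • pauliOp q) =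
        (commSign p q : ℂ) • ((labelSign S q • pauliOp q) * (labelSign S p • pauliOp p)) := by
      rw [smul_mul_smul_comm, smul_mul_smul_comm, pauliOp_mul_comm, smul_smul, smul_smul,
        mul_comm (labelSign S p)]
      ring_nf
    exact_mod_cast eq_one_of_mul_eq_smul_mul hv (hstab _ (hmul _ hp' _ hq'))
      (hstab _ (hmul _ hq' _ hp')) hcomm

theorem le_pauliWeight_of_mem_labelSet {v : (Fin n → Fin 2) → ℂ} (hv : star v ⬝ᵥ v = 1)
    (hstab : ∀ σ ∈ S, σ *ᵥ v = v) {d : ℕ}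
    (hvanish : ∀ p : Fin n → Fin 4, p ≠ 0 → pauliWeight p < d → star v ⬝ᵥ pauliOp p *ᵥ v = 0)
    {p : Fin n → Fin 4} (hp : p ∈ labelSet S) (hp0 : p ≠ 0) : d ≤ pauliWeight p := by
  by_contra! hlt
  have h : star v ⬝ᵥ (labelSign S p • pauliOp p) *ᵥ v = 1 := by
    rw [hstab _ (labelSign_smul_mem hp), hv]
  rw [Matrix.smul_mulVec, dotProduct_smul, hvanish p hp0 hlt, smul_zero] at h
  exact zero_ne_one h

end StabilizerLabels

/-- For a 5-qubit AME stabilizer state: every triple of qubits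
supports exactly one non-identity stabilizer element, and the weight distribution of
the 32 stabilizer elements is `1 + 10 z³ + 15 z⁴ + 6 z⁵`. -/
theorem stmt18
    (v : (Fin 5 → Fin 2) → ℂ) (hv : star v ⬝ᵥ v = 1)
    (S : Finset (Matrix (Fin 5 → Fin 2) (Fin 5 → Fin 2) ℂ))
    (hcard : S.card = 32)
    (hone : (1 : Matrix (Fin 5 → Fin 2) (Fin 5 → Fin 2) ℂ) ∈ S)
    (hmul : ∀ σ ∈ S, ∀ τ ∈ S, σ * τ ∈ S)
    (hpauli : ∀ σ ∈ S, ∃ (ε : ℂ) (p : Fin 5 → Fin 4), (ε = 1 ∨ ε = -1) ∧ σ = ε • pauliOp p)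
    (hstab : ∀ σ ∈ S, σ.mulVec v = v)
    (hAME : ∀ p : Fin 5 → Fin 4, p ≠ (fun _ => 0) → {i | p i ≠ 0}.ncard ≤ 2 →
      star v ⬝ᵥ (pauliOp p).mulVec v = 0) :
    (∀ T : Finset (Fin 5), T.card = 3 →
      {σ ∈ (S : Set (Matrix (Fin 5 → Fin 2) (Fin 5 → Fin 2) ℂ)) |
        ∃ (ε : ℂ) (p : Fin 5 → Fin 4), (ε = 1 ∨ ε = -1) ∧ σ = ε • pauliOp p ∧
          {i | p i ≠ 0} = (T : Set (Fin 5))}.ncard = 1) ∧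
    {σ ∈ (S : Set (Matrix (Fin 5 → Fin 2) (Fin 5 → Fin 2) ℂ)) | hasWeight σ 0}.ncard = 1 ∧
    {σ ∈ (S : Set (Matrix (Fin 5 → Fin 2) (Fin 5 → Fin 2) ℂ)) | hasWeight σ 3}.ncard = 10 ∧
    {σ ∈ (S : Set (Matrix (Fin 5 → Fin 2) (Fin 5 → Fin 2) ℂ)) | hasWeight σ 4}.ncard = 15 ∧
    {σ ∈ (S : Set (Matrix (Fin 5 → Fin 2) (Fin 5 → Fin 2) ℂ)) | hasWeight σ 5}.ncard = 6 := by
  have hv0 : v ≠ 0 := by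
    rintro rfl
    simp at hv
  have hneg : ∀ σ ∈ S, -σ ∉ S := fun σ => neg_notMem_of_forall_mulVec_eq hv0 hstab
  have hP := isIsotropicSubgroup_labelSet hv0 hone hmul hpauli hstab
  have hcardP : #(labelSet S) = 32 := (card_labelSet hneg hpauli).trans hcard
  have hdist : ∀ p ∈ labelSet S, p ≠ 0 → 3 ≤ pauliWeight p := fun p =>
    le_pauliWeight_of_mem_labelSet hv hstab fun q hq0 hq => hAME q hq0 (by
      rw [ncard_setOf_ne_zero]
      omega)
  simp only [hasWeight, ← coe_pauliSupport, coe_inj, Set.ncard_coe_finset,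
    ncard_setOf_smul_pauliOp hneg]
  obtain ⟨h3, h4, h5⟩ := weightCount_of_five_qubits hP hcardP hdist
  exact ⟨fun T hT => card_filter_support_eq_of_five_qubits hP hcardP hdist hT,
    weightCount_zero hP.zero_mem, h3, h4, h5⟩
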